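/- Let N be a chemical reaction network on m species with reactions (z_i, z'_i) and rate constants k_i > 0, i = 1,…,r, mass-action vector field f(x) = Σ_{i=1}^r k_i (z'_i − z_i) x^{z_i}, and stoichiometric subspace S = span{ z'_i − z_i : i = 1,…,r }. Suppose N admits a complex balanced equilibrium x* ∈ ℝ^m_{>0}. Then for every x₀ ∈ ℝ^m_{>0}, the positive stoichiometric compatibility class C = (x₀ + S) ∩ ℝ^m_{>0} contains exactly one point x̄ with f(x̄) = 0, and x̄ is a locally asymptotically stable equilibrium of x' = f(x) relative to C. -/

import Mathlib

open scoped BigOperators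

/-- `xs` is a complex balanced point of the mass-action system: for every complex `z0`,
the total inflow rate to `z0` equals the total outflow rate from `z0` at `xs`. -/
def ComplexBalanced (m r : ℕ) (z z' : Fin r → Fin m → ℕ) (k : Fin r → ℝ)
    (xs : Fin m → ℝ) : Prop :=
  ∀ z0 : Fin m → ℕ,
    (∑ i ∈ Finset.univ.filter (fun i => z' i = z0), k i * ∏ j, xs j ^ z i j)
      = (∏ j, xs j ^ z0 j) * ∑ i ∈ Finset.univ.filter (fun i => z i = z0), k i

/-- A solution of `x' = f(x)` on `[0,∞)` taking values in `D`. -/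
def IsSolutionOn (m : ℕ) (f : (Fin m → ℝ) → (Fin m → ℝ)) (D : Set (Fin m → ℝ))
    (x : ℝ → Fin m → ℝ) : Prop :=
  (∀ t : ℝ, 0 ≤ t → x t ∈ D) ∧
  ∀ t : ℝ, 0 ≤ t → HasDerivWithinAt x (f (x t)) (Set.Ici 0) t

/-- `xs` is a locally asymptotically stable equilibrium of `x' = f(x)` relative to `D`. -/
def IsLocAsympStableRel (m : ℕ) (f : (Fin m → ℝ) → (Fin m → ℝ)) (D : Set (Fin m → ℝ))
    (xs : Fin m → ℝ) : Prop :=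
  (∀ ε > 0, ∃ δ > 0, ∀ x : ℝ → Fin m → ℝ, IsSolutionOn m f D x →
      ‖x 0 - xs‖ < δ → ∀ t ≥ (0 : ℝ), ‖x t - xs‖ < ε) ∧
  (∃ δ₀ > 0, ∀ x : ℝ → Fin m → ℝ, IsSolutionOn m f D x →
      ‖x 0 - xs‖ < δ₀ → Filter.Tendsto x Filter.atTop (nhds xs))

/-!
Birch's theorem provides the equilibrium: the free energy
`V_{x*}(x) = ∑ⱼ (xⱼ log (xⱼ / x*ⱼ) - xⱼ + x*ⱼ)` attains its minimum on the closed class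
`(x₀ + S) ∩ ℝ^m_{≥0}` at a point `x̄` of the open orthant, since `V_{x*}` has slope `-∞`
across the boundary, and the first-order condition `log x̄ - log x* ⊥ S` makes `x̄` complex
balanced too.

For `x > 0` and `u = log x - log x̄`, complex balancing at `x̄` turns the derivative of `V_{x̄}`
along the flow into `⟨u, f x⟩ = -∑ᵢ kᵢ x̄^{zᵢ} B(⟨u, zᵢ⟩, ⟨u, z'ᵢ⟩)`, where
`B(a, b) = eᵇ - eᵃ - eᵃ (b - a) ≥ 0` vanishes only for `a = b`. So `V_{x̄}` decreases, strictly
unless `u ⊥ S`; and `u ⊥ S` together with `x - x̄ ∈ S` gives `⟨log x - log x̄, x - x̄⟩ = 0`,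
hence `x = x̄` by monotonicity of `log`. Thus `x̄` is the only equilibrium of its class and
`V_{x̄}` is a strict Lyapunov function there; compactness of the closed class near `x̄` turns
this into local asymptotic stability.
-/

open Real Set Filter Topology Metric InformationTheory

lemma le_add_mul_of_hasDerivWithinAt_le {g g' : ℝ → ℝ} {c : ℝ}
    (hg : ∀ t ≥ 0, HasDerivWithinAt g (g' t) (Ici 0) t) (hc : ∀ t ≥ 0, g' t ≤ c)
    {s t : ℝ} (hs : 0 ≤ s) (hst : s ≤ t) : g t ≤ g s + c * (t - s) := by
  have hg' : ∀ u ∈ Ici s, HasDerivWithinAt g (g' u) (Ici u) u := fun u hu =>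
    (hg u (hs.trans hu)).mono (Ici_subset_Ici.2 (hs.trans hu))
  refine image_le_of_deriv_right_le_deriv_boundary (B := fun u => g s + c * (u - s))
    (fun u hu => (hg u (hs.trans hu.1)).continuousWithinAt.mono fun v hv => hs.trans hv.1)
    (fun u hu => hg' u hu.1) (by simp) (by fun_prop)
    (fun u _ => (((hasDerivAt_id u).sub_const s).const_mul c).const_add _ |>.hasDerivWithinAt
      |>.congr_deriv (mul_one c))
    (fun u hu => hc u (hs.trans hu.1)) ⟨hst, le_rfl⟩

lemma dotProduct_eq_zero_of_mem_span {R n ι : Type*} [CommSemiring R] [Fintype n]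
    {v : ι → n → R} {u w : n → R} (hu : ∀ i, u ⬝ᵥ v i = 0)
    (hw : w ∈ Submodule.span R (Set.range v)) : u ⬝ᵥ w = 0 := by
  induction hw using Submodule.span_induction with
  | mem _ hy => obtain ⟨i, rfl⟩ := hy; exact hu i
  | zero => exact dotProduct_zero u
  | add _ _ _ _ h₁ h₂ => rw [dotProduct_add, h₁, h₂, add_zero]
  | smul a _ _ h => rw [dotProduct_smul, h, smul_zero]

lemma log_sub_log_mul_sub_pos {a b : ℝ} (ha : 0 < a) (hb : 0 < b) (hab : a ≠ b) :
    0 < (log a - log b) * (a - b) := by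
  rcases hab.lt_or_gt with h | h
  · exact mul_pos_of_neg_of_neg (sub_neg.2 (log_lt_log ha h)) (sub_neg.2 h)
  · exact mul_pos (sub_pos.2 (log_lt_log hb h)) (sub_pos.2 h)

noncomputable def expBregman (a b : ℝ) : ℝ := exp b - exp a - exp a * (b - a)

lemma expBregman_nonneg (a b : ℝ) : 0 ≤ expBregman a b := by
  have h : exp a * (b - a + 1) ≤ exp a * exp (b - a) :=
    mul_le_mul_of_nonneg_left (add_one_le_exp _) (exp_pos a).le
  rw [← exp_add, add_sub_cancel] at h
  unfold expBregman; linarith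

lemma expBregman_pos {a b : ℝ} (hab : a ≠ b) : 0 < expBregman a b := by
  have h : exp a * (b - a + 1) < exp a * exp (b - a) :=
    mul_lt_mul_of_pos_left (add_one_lt_exp (sub_ne_zero.2 hab.symm)) (exp_pos a)
  rw [← exp_add, add_sub_cancel] at h
  unfold expBregman; linarith

lemma IsSolutionOn.continuousOn {m : ℕ} {f : (Fin m → ℝ) → Fin m → ℝ} {D : Set (Fin m → ℝ)}
    {x : ℝ → Fin m → ℝ} (hx : IsSolutionOn m f D x) : ContinuousOn x (Ici 0) :=
  fun t ht => (hx.2 t ht).continuousWithinAt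

/-- Solutions run in `C ∩ U`. The closed set `C` carries the definiteness of `V`, while `U` only
carries the continuity of the orbital derivative `W`, which for the free energy fails on the
boundary of the orthant. -/
structure IsStrictLyapunov {m : ℕ} (f : (Fin m → ℝ) → Fin m → ℝ) (C U : Set (Fin m → ℝ))
    (p : Fin m → ℝ) (V W : (Fin m → ℝ) → ℝ) : Prop where
  continuous : Continuous V
  apply_self : V p = 0
  pos : ∀ y ∈ C, y ≠ p → 0 < V y
  continuousOn_deriv : ContinuousOn W U
  deriv_nonpos : ∀ y ∈ C ∩ U, W y ≤ 0
  eq_of_deriv_eq_zero : ∀ y ∈ C ∩ U, W y = 0 → y = p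
  hasDerivWithinAt : ∀ x, IsSolutionOn m f (C ∩ U) x → ∀ t ≥ 0,
    HasDerivWithinAt (V ∘ x) (W (x t)) (Ici 0) t

namespace IsStrictLyapunov

variable {m : ℕ} {f : (Fin m → ℝ) → Fin m → ℝ} {C U : Set (Fin m → ℝ)} {p : Fin m → ℝ}
  {V W : (Fin m → ℝ) → ℝ} {x : ℝ → Fin m → ℝ}

lemma le_add_mul (hL : IsStrictLyapunov f C U p V W) (hx : IsSolutionOn m f (C ∩ U) x)
    {c : ℝ} (hc : ∀ t ≥ 0, W (x t) ≤ c) {s t : ℝ} (hs : 0 ≤ s) (hst : s ≤ t) :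
    V (x t) ≤ V (x s) + c * (t - s) :=
  le_add_mul_of_hasDerivWithinAt_le (hL.hasDerivWithinAt x hx) hc hs hst

lemma apply_le_of_le (hL : IsStrictLyapunov f C U p V W) (hx : IsSolutionOn m f (C ∩ U) x)
    {s t : ℝ} (hs : 0 ≤ s) (hst : s ≤ t) : V (x t) ≤ V (x s) := by
  simpa using hL.le_add_mul hx (fun t ht => hL.deriv_nonpos _ (hx.1 t ht)) hs hst

lemma exists_lt_of_norm_sub_lt (hL : IsStrictLyapunov f C U p V W) {c : ℝ} (hc : 0 < c) :
    ∃ δ > 0, ∀ y, ‖y - p‖ < δ → V y < c := by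
  have : ∀ᶠ y in 𝓝 p, V y < c :=
    hL.continuous.continuousAt.eventually_lt continuousAt_const (hL.apply_self ▸ hc)
  simpa only [Metric.eventually_nhds_iff, dist_eq_norm] using this

lemma stable (hL : IsStrictLyapunov f C U p V W) (hC : IsClosed C) {ε : ℝ} (hε : 0 < ε) :
    ∃ δ > 0, ∀ x, IsSolutionOn m f (C ∩ U) x → ‖x 0 - p‖ < δ → ∀ t ≥ (0 : ℝ), ‖x t - p‖ < ε := by
  obtain ⟨c, hc, hcV⟩ : ∃ c > 0, ∀ y ∈ C ∩ sphere p ε, c ≤ V y :=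
    ((isCompact_sphere p ε).inter_left hC).exists_forall_le' hL.continuous.continuousOn
      fun y hy => hL.pos y hy.1 (ne_of_mem_sphere hy.2 hε.ne')
  obtain ⟨δ, hδ, hδV⟩ := hL.exists_lt_of_norm_sub_lt hc
  refine ⟨min δ ε, lt_min hδ hε, fun x hx hx0 t ht => ?_⟩
  by_contra! hxt
  obtain ⟨s, hs, hxs⟩ : ∃ s ∈ Icc 0 t, ‖x s - p‖ = ε :=
    intermediate_value_Icc ht
      ((hx.continuousOn.mono Icc_subset_Ici_self).sub continuousOn_const).norm
      ⟨(hx0.trans_le (min_le_right _ _)).le, hxt⟩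
  have hlow : c ≤ V (x s) := hcV (x s) ⟨(hx.1 s hs.1).1, mem_sphere_iff_norm.2 hxs⟩
  have hdec : V (x s) ≤ V (x 0) := hL.apply_le_of_le hx le_rfl hs.1
  have hstart : V (x 0) < c := hδV _ (hx0.trans_le (min_le_left _ _))
  linarith

lemma exists_lt_of_forall_mem (hL : IsStrictLyapunov f C U p V W) {K : Set (Fin m → ℝ)}
    (hK : IsCompact K) (hKCU : K ⊆ C ∩ U) (hx : IsSolutionOn m f (C ∩ U) x)
    (hxK : ∀ t ≥ 0, x t ∈ K) {c : ℝ} (hc : 0 < c) : ∃ T ≥ 0, V (x T) < c := by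
  -- Otherwise `W ≤ -η` along the whole solution, and `V` would become negative.
  by_contra! hge
  obtain ⟨η, hη, hWη⟩ : ∃ η > 0, ∀ y ∈ K ∩ V ⁻¹' Ici c, η ≤ -W y := by
    refine (hK.inter_right (isClosed_Ici.preimage hL.continuous)).exists_forall_le'
      (hL.continuousOn_deriv.mono fun y hy => (hKCU hy.1).2).neg fun y hy => ?_
    refine neg_pos.2 <| (hL.deriv_nonpos y (hKCU hy.1)).lt_of_ne fun h => ?_
    have hVy : c ≤ V y := hy.2
    rw [hL.eq_of_deriv_eq_zero y (hKCU hy.1) h, hL.apply_self] at hVy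
    linarith
  have hT : 0 ≤ V (x 0) / η := div_nonneg (hc.le.trans (hge 0 le_rfl)) hη.le
  have hdecay := hL.le_add_mul hx (c := -η)
    (fun t ht => by linarith [hWη (x t) ⟨hxK t ht, hge t ht⟩]) le_rfl hT
  have hcancel : η * (V (x 0) / η) = V (x 0) := mul_div_cancel₀ _ hη.ne'
  linarith [hge _ hT]

lemma attractive (hL : IsStrictLyapunov f C U p V W) (hC : IsClosed C) (hU : IsOpen U)
    (hpU : p ∈ U) : ∃ δ₀ > 0, ∀ x, IsSolutionOn m f (C ∩ U) x → ‖x 0 - p‖ < δ₀ →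
      Tendsto x atTop (𝓝 p) := by
  obtain ⟨δ₁, hδ₁, hstay⟩ := hL.stable hC one_pos
  have hB : IsCompact (C ∩ closedBall p 1) := (isCompact_closedBall p 1).inter_left hC
  obtain ⟨c, hc, hcV⟩ : ∃ c > 0, ∀ y ∈ (C ∩ closedBall p 1) \ U, c ≤ V y :=
    (hB.diff hU).exists_forall_le' hL.continuous.continuousOn
      fun y hy => hL.pos y hy.1.1 fun h => hy.2 (h ▸ hpU)
  obtain ⟨δ₂, hδ₂, hδ₂V⟩ := hL.exists_lt_of_norm_sub_lt (half_pos hc)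
  refine ⟨min δ₁ δ₂, lt_min hδ₁ hδ₂, fun x hx hx0 => ?_⟩
  -- Solutions starting near `p` stay in `K`, a compact set kept away from the complement of `U`
  -- by the bound `c ≤ V` there.
  set K := C ∩ closedBall p 1 ∩ V ⁻¹' Iic (c / 2)
  have hK : IsCompact K := hB.inter_right (isClosed_Iic.preimage hL.continuous)
  have hKCU : K ⊆ C ∩ U := fun y hy => ⟨hy.1.1, by_contra fun hyU => by
    linarith [hcV y ⟨hy.1, hyU⟩, show V y ≤ c / 2 from hy.2]⟩
  have hxK : ∀ t ≥ 0, x t ∈ K := fun t ht =>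
    ⟨⟨(hx.1 t ht).1, mem_closedBall_iff_norm.2
        (hstay x hx (hx0.trans_le (min_le_left _ _)) t ht).le⟩,
      (hL.apply_le_of_le hx le_rfl ht).trans (hδ₂V _ (hx0.trans_le (min_le_right _ _))).le⟩
  refine Metric.tendsto_atTop.2 fun ε hε => ?_
  obtain ⟨c', hc', hc'V⟩ : ∃ c' > 0, ∀ y ∈ (K \ ball p ε), c' ≤ V y :=
    (hK.diff isOpen_ball).exists_forall_le' hL.continuous.continuousOn
      fun y hy => hL.pos y hy.1.1.1 fun h => hy.2 (h ▸ mem_ball_self hε)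
  obtain ⟨T, hT, hVT⟩ := hL.exists_lt_of_forall_mem hK hKCU hx hxK hc'
  refine ⟨T, fun t htT => by_contra fun hxt => ?_⟩
  linarith [hc'V (x t) ⟨hxK t (hT.trans htT), hxt⟩, hL.apply_le_of_le hx hT htT]

theorem isLocAsympStableRel (hL : IsStrictLyapunov f C U p V W) (hC : IsClosed C)
    (hU : IsOpen U) (hpU : p ∈ U) : IsLocAsympStableRel m f (C ∩ U) p :=
  ⟨fun _ hε => hL.stable hC hε, hL.attractive hC hU hpU⟩

end IsStrictLyapunov

namespace MassAction

variable {m r : ℕ}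

def monomial (x : Fin m → ℝ) (c : Fin m → ℕ) : ℝ := ∏ j, x j ^ c j

def reactionVector (z z' : Fin r → Fin m → ℕ) (i : Fin r) : Fin m → ℝ :=
  fun j => (z' i j : ℝ) - (z i j : ℝ)

def massActionField (k : Fin r → ℝ) (z z' : Fin r → Fin m → ℕ) (x : Fin m → ℝ) : Fin m → ℝ :=
  ∑ i : Fin r, k i • (fun j => ((z' i j : ℝ) - (z i j : ℝ)) * ∏ l, x l ^ z i l)

noncomputable def logDiff (x p : Fin m → ℝ) : Fin m → ℝ := fun j => log (x j) - log (p j)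

variable {z z' : Fin r → Fin m → ℕ} {k : Fin r → ℝ} {p x : Fin m → ℝ}

lemma reactionVector_eq_sub (i : Fin r) :
    reactionVector z z' i = (Nat.cast ∘ z' i : Fin m → ℝ) - Nat.cast ∘ z i := rfl

lemma massActionField_eq_sum (x : Fin m → ℝ) :
    massActionField k z z' x = ∑ i, (k i * monomial x (z i)) • reactionVector z z' i := by
  refine Finset.sum_congr rfl fun i _ => funext fun j => ?_
  simp only [Pi.smul_apply, smul_eq_mul, monomial, reactionVector]
  ring

@[fun_prop]
lemma continuous_massActionField : Continuous (massActionField k z z') := by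
  unfold massActionField; fun_prop

lemma monomial_pos (hp : ∀ j, 0 < p j) (c : Fin m → ℕ) : 0 < monomial p c :=
  Finset.prod_pos fun j _ => pow_pos (hp j) _

lemma monomial_eq_mul_exp (hx : ∀ j, 0 < x j) (hp : ∀ j, 0 < p j) (c : Fin m → ℕ) :
    monomial x c = monomial p c * exp (logDiff x p ⬝ᵥ (Nat.cast ∘ c)) := by
  rw [dotProduct, exp_sum, monomial, monomial, ← Finset.prod_mul_distrib]
  refine Finset.prod_congr rfl fun j _ => ?_
  rw [logDiff, Function.comp_apply, mul_comm _ (c j : ℝ), exp_nat_mul, exp_sub, exp_log (hx j),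
    exp_log (hp j), div_pow, mul_div_cancel₀ _ (pow_ne_zero _ (hp j).ne')]

lemma eq_of_logDiff_dotProduct_sub_eq_zero (hx : ∀ j, 0 < x j) (hp : ∀ j, 0 < p j)
    (h : logDiff x p ⬝ᵥ (x - p) = 0) : x = p := by
  by_contra hne
  obtain ⟨j, hj⟩ := Function.ne_iff.1 hne
  have hterm : ∀ i, 0 ≤ (log (x i) - log (p i)) * (x i - p i) := fun i => by
    rcases eq_or_ne (x i) (p i) with hi | hi
    · rw [hi, sub_self, zero_mul]
    · exact (log_sub_log_mul_sub_pos (hx i) (hp i) hi).le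
  exact h.not_gt <| Finset.sum_pos' (fun i _ => hterm i)
    ⟨j, Finset.mem_univ j, log_sub_log_mul_sub_pos (hx j) (hp j) hj⟩

end MassAction

open MassAction

namespace ComplexBalanced

variable {m r : ℕ} {z z' : Fin r → Fin m → ℕ} {k : Fin r → ℝ} {p : Fin m → ℝ}

lemma sum_smul_product_eq {M : Type*} [AddCommGroup M] [Module ℝ M]
    (hcb : ComplexBalanced m r z z' k p) (G : (Fin m → ℕ) → M) :
    ∑ i, (k i * monomial p (z i)) • G (z' i) = ∑ i, (k i * monomial p (z i)) • G (z i) := by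
  let T := Finset.univ.image z ∪ Finset.univ.image z'
  rw [← Finset.sum_fiberwise_of_maps_to (t := T) (g := z')
      fun i _ => Finset.mem_union_right _ (Finset.mem_image_of_mem _ (Finset.mem_univ i)),
    ← Finset.sum_fiberwise_of_maps_to (t := T) (g := z)
      fun i _ => Finset.mem_union_left _ (Finset.mem_image_of_mem _ (Finset.mem_univ i))]
  refine Finset.sum_congr rfl fun c _ => ?_
  calc ∑ i ∈ Finset.univ.filter (fun i => z' i = c), (k i * monomial p (z i)) • G (z' i)
      = (∑ i ∈ Finset.univ.filter (fun i => z' i = c), k i * monomial p (z i)) • G c := by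
        rw [Finset.sum_smul]
        exact Finset.sum_congr rfl fun i hi => by rw [(Finset.mem_filter.1 hi).2]
    _ = (monomial p c * ∑ i ∈ Finset.univ.filter (fun i => z i = c), k i) • G c :=
        congrArg (· • G c) (hcb c)
    _ = ∑ i ∈ Finset.univ.filter (fun i => z i = c), (k i * monomial p (z i)) • G (z i) := by
        rw [Finset.mul_sum, Finset.sum_smul]
        exact Finset.sum_congr rfl fun i hi => by rw [(Finset.mem_filter.1 hi).2, mul_comm]

lemma massActionField_eq_zero (hcb : ComplexBalanced m r z z' k p) :
    massActionField k z z' p = 0 := by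
  simp only [massActionField_eq_sum, reactionVector_eq_sub, smul_sub, Finset.sum_sub_distrib,
    hcb.sum_smul_product_eq (fun c => (Nat.cast ∘ c : Fin m → ℝ)), sub_self]

variable {x : Fin m → ℝ}

lemma logDiff_dotProduct_massActionField (hcb : ComplexBalanced m r z z' k p)
    (hp : ∀ j, 0 < p j) (hx : ∀ j, 0 < x j) :
    logDiff x p ⬝ᵥ massActionField k z z' x = -∑ i, k i * monomial p (z i) *
      expBregman (logDiff x p ⬝ᵥ (Nat.cast ∘ z i)) (logDiff x p ⬝ᵥ (Nat.cast ∘ z' i)) := by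
  have hbal := hcb.sum_smul_product_eq fun c => exp (logDiff x p ⬝ᵥ (Nat.cast ∘ c))
  simp only [smul_eq_mul] at hbal
  rw [massActionField_eq_sum, dotProduct_sum]
  simp only [dotProduct_smul, smul_eq_mul, reactionVector_eq_sub, dotProduct_sub,
    monomial_eq_mul_exp hx hp, expBregman, mul_sub, Finset.sum_sub_distrib, hbal]
  ring_nf

lemma logDiff_dotProduct_massActionField_nonpos (hk : ∀ i, 0 < k i)
    (hcb : ComplexBalanced m r z z' k p) (hp : ∀ j, 0 < p j) (hx : ∀ j, 0 < x j) :
    logDiff x p ⬝ᵥ massActionField k z z' x ≤ 0 := by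
  rw [hcb.logDiff_dotProduct_massActionField hp hx, neg_nonpos]
  exact Finset.sum_nonneg fun i _ =>
    mul_nonneg (mul_pos (hk i) (monomial_pos hp _)).le (expBregman_nonneg _ _)

lemma logDiff_dotProduct_reactionVector_eq_zero (hk : ∀ i, 0 < k i)
    (hcb : ComplexBalanced m r z z' k p) (hp : ∀ j, 0 < p j) (hx : ∀ j, 0 < x j)
    (h : logDiff x p ⬝ᵥ massActionField k z z' x = 0) (i : Fin r) :
    logDiff x p ⬝ᵥ reactionVector z z' i = 0 := by
  rw [hcb.logDiff_dotProduct_massActionField hp hx, neg_eq_zero] at h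
  have hweight : ∀ i, 0 < k i * monomial p (z i) := fun i => mul_pos (hk i) (monomial_pos hp _)
  by_contra hi
  rw [reactionVector_eq_sub, dotProduct_sub, sub_eq_zero] at hi
  exact h.not_gt <| Finset.sum_pos'
    (fun i' _ => mul_nonneg (hweight i').le (expBregman_nonneg _ _))
    ⟨i, Finset.mem_univ i, mul_pos (hweight i) (expBregman_pos (Ne.symm hi))⟩

lemma of_logDiff_dotProduct_reactionVector_eq_zero (hcb : ComplexBalanced m r z z' k p)
    (hp : ∀ j, 0 < p j) (hx : ∀ j, 0 < x j)
    (horth : ∀ i, logDiff x p ⬝ᵥ reactionVector z z' i = 0) : ComplexBalanced m r z z' k x := by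
  intro c
  have hshift : ∀ i ∈ Finset.univ.filter (fun i => z' i = c),
      k i * monomial x (z i) = exp (logDiff x p ⬝ᵥ (Nat.cast ∘ c)) * (k i * monomial p (z i)) := by
    intro i hi
    have := horth i
    rw [reactionVector_eq_sub, dotProduct_sub, sub_eq_zero, (Finset.mem_filter.1 hi).2] at this
    rw [monomial_eq_mul_exp hx hp, ← this]
    ring
  have := hcb c
  change ∑ i ∈ _, k i * monomial x (z i) = monomial x c * _
  change ∑ i ∈ _, k i * monomial p (z i) = monomial p c * _ at this
  rw [Finset.sum_congr rfl hshift, ← Finset.mul_sum, this, monomial_eq_mul_exp hx hp c]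
  ring

lemma eq_of_logDiff_dotProduct_massActionField_eq_zero (hk : ∀ i, 0 < k i)
    (hcb : ComplexBalanced m r z z' k p) (hp : ∀ j, 0 < p j) (hx : ∀ j, 0 < x j)
    (hxp : x - p ∈ Submodule.span ℝ (Set.range (reactionVector z z')))
    (h : logDiff x p ⬝ᵥ massActionField k z z' x = 0) : x = p :=
  eq_of_logDiff_dotProduct_sub_eq_zero hx hp <| dotProduct_eq_zero_of_mem_span
    (hcb.logDiff_dotProduct_reactionVector_eq_zero hk hp hx h) hxp

end ComplexBalanced

namespace MassAction

variable {m : ℕ} {p x : Fin m → ℝ}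

/-- `p j * klFun (x j / p j) = x j * log (x j / p j) - x j + p j`. -/
noncomputable def freeEnergy (p x : Fin m → ℝ) : ℝ := ∑ j, p j * klFun (x j / p j)

lemma continuous_freeEnergy (p : Fin m → ℝ) : Continuous (freeEnergy p) :=
  continuous_finsetSum _ fun j _ =>
    continuous_const.mul (continuous_klFun.comp ((continuous_apply j).div_const _))

lemma freeEnergy_self (hp : ∀ j, 0 < p j) : freeEnergy p p = 0 :=
  Finset.sum_eq_zero fun j _ => by rw [div_self (hp j).ne', klFun_one, mul_zero]

lemma mul_klFun_div_nonneg {a s : ℝ} (ha : 0 < a) (hs : 0 ≤ s) : 0 ≤ a * klFun (s / a) :=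
  mul_nonneg ha.le (klFun_nonneg (div_nonneg hs ha.le))

lemma freeEnergy_nonneg (hp : ∀ j, 0 < p j) (hx : ∀ j, 0 ≤ x j) : 0 ≤ freeEnergy p x :=
  Finset.sum_nonneg fun j _ => mul_klFun_div_nonneg (hp j) (hx j)

lemma freeEnergy_pos (hp : ∀ j, 0 < p j) (hx : ∀ j, 0 ≤ x j) (hne : x ≠ p) :
    0 < freeEnergy p x := by
  obtain ⟨j, hj⟩ := Function.ne_iff.1 hne
  refine Finset.sum_pos' (fun j _ => mul_klFun_div_nonneg (hp j) (hx j)) ⟨j, Finset.mem_univ j, ?_⟩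
  refine mul_pos (hp j) ((klFun_nonneg (div_nonneg (hx j) (hp j).le)).lt_of_ne fun h => hj ?_)
  rwa [eq_comm, klFun_eq_zero_iff (div_nonneg (hx j) (hp j).le), div_eq_one_iff_eq (hp j).ne'] at h

lemma add_one_sub_exp_one_le_klFun {s : ℝ} (hs : 0 ≤ s) : s + 1 - exp 1 ≤ klFun s := by
  rcases hs.eq_or_lt with rfl | hs
  · simp [klFun_zero, (exp_pos 1).le]
  have hlog : 1 - exp 1 / s ≤ log s - 1 := by
    have := one_sub_inv_le_log_of_pos (div_pos hs (exp_pos 1))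
    rwa [inv_div, log_div hs.ne' (exp_pos 1).ne', log_exp] at this
  have : s * (1 - exp 1 / s) = s - exp 1 := by field_simp
  rw [klFun_apply]
  nlinarith [mul_le_mul_of_nonneg_left hlog hs.le]

lemma le_freeEnergy_add (hp : ∀ j, 0 < p j) (hx : ∀ j, 0 ≤ x j) (j : Fin m) :
    x j ≤ freeEnergy p x + exp 1 * p j := by
  have hterm : p j * (x j / p j + 1 - exp 1) ≤ p j * klFun (x j / p j) :=
    mul_le_mul_of_nonneg_left (add_one_sub_exp_one_le_klFun (div_nonneg (hx j) (hp j).le)) (hp j).le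
  have hsum : p j * klFun (x j / p j) ≤ freeEnergy p x :=
    Finset.single_le_sum (f := fun j => p j * klFun (x j / p j))
      (fun j _ => mul_klFun_div_nonneg (hp j) (hx j)) (Finset.mem_univ j)
  have hlin : p j * (x j / p j + 1 - exp 1) = x j + p j - exp 1 * p j := by
    field_simp [(hp j).ne']
  linarith [hp j]

lemma _root_.HasDerivWithinAt.freeEnergy {γ : ℝ → Fin m → ℝ} {γ' : Fin m → ℝ} {s : Set ℝ} {t : ℝ}
    (hγ : HasDerivWithinAt γ γ' s t) (hγt : ∀ j, 0 < γ t j) (hp : ∀ j, 0 < p j) :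
    HasDerivWithinAt (fun u => freeEnergy p (γ u)) (logDiff (γ t) p ⬝ᵥ γ') s t := by
  have hterm : ∀ j ∈ Finset.univ, HasDerivWithinAt (fun u => p j * klFun (γ u j / p j))
      (logDiff (γ t) p j * γ' j) s t := fun j _ => by
    refine ((hasDerivAt_klFun (div_pos (hγt j) (hp j)).ne').comp_hasDerivWithinAt t
      ((hasDerivWithinAt_pi.1 hγ j).div_const (p j)) |>.const_mul (p j)).congr_deriv ?_
    rw [logDiff, log_div (hγt j).ne' (hp j).ne']
    field_simp [(hp j).ne']
  exact HasDerivWithinAt.fun_sum hterm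

lemma freeEnergy_segment_le (hp : ∀ j, 0 < p j) {b y : Fin m → ℝ} (hb : ∀ j, 0 ≤ b j)
    (hy : ∀ j, 0 ≤ y j) {t : ℝ} (ht₀ : 0 ≤ t) (ht₁ : t ≤ 1) (j₀ : Fin m) :
    freeEnergy p ((1 - t) • b + t • y) ≤ freeEnergy p b + t * freeEnergy p y
      + (p j₀ * klFun (((1 - t) * b j₀ + t * y j₀) / p j₀) - p j₀ * klFun (b j₀ / p j₀)) := by
  set w := (1 - t) • b + t • y
  have hconv : ∀ j, p j * klFun (w j / p j) ≤
      p j * klFun (b j / p j) + t * (p j * klFun (y j / p j)) := fun j => by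
    have h := convexOn_klFun.2 (mem_Ici.2 (div_nonneg (hb j) (hp j).le))
      (mem_Ici.2 (div_nonneg (hy j) (hp j).le)) (sub_nonneg.2 ht₁) ht₀ (sub_add_cancel 1 t)
    have hw : w j / p j = (1 - t) • (b j / p j) + t • (y j / p j) := by
      simp only [w, Pi.add_apply, Pi.smul_apply, smul_eq_mul]; ring
    simp only [smul_eq_mul] at h hw
    rw [hw]
    nlinarith [mul_le_mul_of_nonneg_left h (hp j).le,
      mul_nonneg ht₀ (mul_klFun_div_nonneg (hp j) (hb j))]
  have hsplit := fun v : Fin m → ℝ =>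
    Finset.add_sum_erase Finset.univ (fun j => p j * klFun (v j / p j)) (Finset.mem_univ j₀)
  have hrest : ∑ j ∈ Finset.univ.erase j₀, p j * klFun (w j / p j) ≤
      ∑ j ∈ Finset.univ.erase j₀, p j * klFun (b j / p j)
        + t * ∑ j ∈ Finset.univ.erase j₀, p j * klFun (y j / p j) := by
    rw [Finset.mul_sum, ← Finset.sum_add_distrib]
    exact Finset.sum_le_sum fun j _ => hconv j
  have hwj₀ : w j₀ = (1 - t) * b j₀ + t * y j₀ := by simp [w]
  have hyj₀ := mul_nonneg ht₀ (mul_klFun_div_nonneg (hp j₀) (hy j₀))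
  unfold freeEnergy
  rw [← hsplit w, ← hsplit b, ← hsplit y, hwj₀]
  nlinarith

lemma pos_of_isMinOn_freeEnergy {E : Set (Fin m → ℝ)} (hE : Convex ℝ E)
    (hE₀ : ∀ y ∈ E, ∀ j, 0 ≤ y j) (hp : ∀ j, 0 < p j) {x₀ : Fin m → ℝ} (hx₀E : x₀ ∈ E)
    (hx₀ : ∀ j, 0 < x₀ j) {b : Fin m → ℝ} (hbE : b ∈ E) (hmin : IsMinOn (freeEnergy p) E b)
    (j₀ : Fin m) : 0 < b j₀ := by
  -- Moving from `b` towards `x₀` by `t` changes the `j₀`-th term by `a t log t + O(t)` and the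
  -- others by `O(t)`; `t` is chosen small enough for the total to be `≤ -t`.
  by_contra! hb₀
  replace hb₀ : b j₀ = 0 := le_antisymm hb₀ (hE₀ b hbE j₀)
  set a := x₀ j₀
  have ha : 0 < a := hx₀ j₀
  set C := freeEnergy p x₀ + |a * (log (a / p j₀) - 1)|
  have hC : 0 ≤ C := add_nonneg (freeEnergy_nonneg hp fun j => (hx₀ j).le) (abs_nonneg _)
  set t := exp (-(C + 1) / a)
  have ht₀ : 0 < t := exp_pos _
  have ht₁ : t < 1 := exp_lt_one_iff.2 (div_neg_of_neg_of_pos (by linarith) ha)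
  have hlogt : a * log t = -(C + 1) := by rw [log_exp, mul_div_cancel₀ _ ha.ne']
  have hj₀ : p j₀ * klFun (((1 - t) * b j₀ + t * a) / p j₀) - p j₀ * klFun (b j₀ / p j₀)
      = t * (a * log t + a * (log (a / p j₀) - 1)) := by
    rw [hb₀, mul_zero, zero_add, zero_div, klFun_zero, klFun_apply, mul_div_assoc,
      log_mul ht₀.ne' (div_pos ha (hp j₀)).ne']
    field_simp [(hp j₀).ne']
    ring
  have hseg := freeEnergy_segment_le hp (hE₀ b hbE) (hE₀ x₀ hx₀E) ht₀.le ht₁.le j₀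
  rw [hj₀] at hseg
  have hmin' := isMinOn_iff.1 hmin _ (hE hbE hx₀E (sub_nonneg.2 ht₁.le) ht₀.le (sub_add_cancel 1 t))
  have hdrop : freeEnergy p x₀ + (a * log t + a * (log (a / p j₀) - 1)) ≤ -1 := by
    linarith [le_abs_self (a * (log (a / p j₀) - 1))]
  nlinarith [mul_le_mul_of_nonneg_left hdrop ht₀.le]

lemma exists_isMinOn_freeEnergy {E : Set (Fin m → ℝ)} (hE : IsClosed E)
    (hE₀ : ∀ y ∈ E, ∀ j, 0 ≤ y j) (hp : ∀ j, 0 < p j) {x₀ : Fin m → ℝ} (hx₀ : x₀ ∈ E) :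
    ∃ b ∈ E, IsMinOn (freeEnergy p) E b := by
  refine (continuous_freeEnergy p).continuousOn.exists_isMinOn' hE hx₀ <|
    (hasBasis_cocompact.inf_principal E).eventually_iff.2
      ⟨Set.pi Set.univ fun j => Icc 0 (freeEnergy p x₀ + exp 1 * p j),
        isCompact_univ_pi fun _ => isCompact_Icc, fun y ⟨hyK, hyE⟩ => ?_⟩
  obtain ⟨j, hj⟩ : ∃ j, y j ∉ Icc 0 (freeEnergy p x₀ + exp 1 * p j) :=
    not_forall.1 fun h => hyK (Set.mem_univ_pi.2 h)
  have hyj : freeEnergy p x₀ + exp 1 * p j < y j := lt_of_not_ge fun h => hj ⟨hE₀ y hyE j, h⟩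
  linarith [le_freeEnergy_add hp (hE₀ y hyE) j]

lemma logDiff_dotProduct_eq_zero_of_isLocalMin (hp : ∀ j, 0 < p j) {b v : Fin m → ℝ}
    (hb : ∀ j, 0 < b j) (hmin : IsLocalMin (fun s : ℝ => freeEnergy p (b + s • v)) 0) :
    logDiff b p ⬝ᵥ v = 0 := by
  have hline : HasDerivAt (fun s : ℝ => b + s • v) v 0 := by
    simpa using ((hasDerivAt_id (0 : ℝ)).smul_const v).const_add b
  have hV := (hline.hasDerivWithinAt (s := univ)).freeEnergy (by simpa using hb) hp
  rw [hasDerivWithinAt_univ, zero_smul, add_zero] at hV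
  exact hmin.hasDerivAt_eq_zero hV

def nonnegClass (S : Submodule ℝ (Fin m → ℝ)) (x₀ : Fin m → ℝ) : Set (Fin m → ℝ) :=
  {y | y - x₀ ∈ S ∧ ∀ j, 0 ≤ y j}

lemma isClosed_nonnegClass (S : Submodule ℝ (Fin m → ℝ)) (x₀ : Fin m → ℝ) :
    IsClosed (nonnegClass S x₀) := by
  have hnonneg : IsClosed {y : Fin m → ℝ | ∀ j, 0 ≤ y j} := by
    simpa only [Set.ofPred_forall] using isClosed_iInter fun j =>
      isClosed_le continuous_const (continuous_apply j : Continuous fun y : Fin m → ℝ => y j)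
  exact (S.closed_of_finiteDimensional.preimage (continuous_id.sub continuous_const)).inter hnonneg

lemma convex_nonnegClass (S : Submodule ℝ (Fin m → ℝ)) (x₀ : Fin m → ℝ) :
    Convex ℝ (nonnegClass S x₀) := by
  intro y hy w hw a c ha hc hac
  refine ⟨?_, fun j => ?_⟩
  · have : a • y + c • w - x₀ = a • (y - x₀) + c • (w - x₀) := by
      rw [smul_sub, smul_sub, sub_add_sub_comm, ← add_smul, hac, one_smul]
    rw [this]
    exact S.add_mem (S.smul_mem a hy.1) (S.smul_mem c hw.1)
  · simpa using add_nonneg (mul_nonneg ha (hy.2 j)) (mul_nonneg hc (hw.2 j))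

lemma isOpen_setOf_forall_pos : IsOpen {y : Fin m → ℝ | ∀ j, 0 < y j} := by
  simpa only [Set.ofPred_forall] using
    isOpen_iInter_of_finite fun j =>
      isOpen_lt continuous_const (continuous_apply j : Continuous fun y : Fin m → ℝ => y j)

lemma setOf_sub_mem_and_pos_eq_inter (S : Submodule ℝ (Fin m → ℝ)) (x₀ : Fin m → ℝ) :
    {x : Fin m → ℝ | x - x₀ ∈ S ∧ ∀ j, 0 < x j} = nonnegClass S x₀ ∩ {x | ∀ j, 0 < x j} := by
  ext x
  exact ⟨fun h => ⟨⟨h.1, fun j => (h.2 j).le⟩, h.2⟩, fun h => ⟨h.1.1, h.2⟩⟩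

theorem exists_pos_sub_mem_span_logDiff_orthogonal {ι : Type*} (d : ι → Fin m → ℝ)
    (hp : ∀ j, 0 < p j) {x₀ : Fin m → ℝ} (hx₀ : ∀ j, 0 < x₀ j) :
    ∃ b, (∀ j, 0 < b j) ∧ b - x₀ ∈ Submodule.span ℝ (Set.range d) ∧
      ∀ i, logDiff b p ⬝ᵥ d i = 0 := by
  set S := Submodule.span ℝ (Set.range d)
  have hx₀E : x₀ ∈ nonnegClass S x₀ := ⟨by simp, fun j => (hx₀ j).le⟩
  obtain ⟨b, hbE, hmin⟩ :=
    exists_isMinOn_freeEnergy (isClosed_nonnegClass S x₀) (fun y hy => hy.2) hp hx₀E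
  have hb := pos_of_isMinOn_freeEnergy (convex_nonnegClass S x₀) (fun y hy => hy.2) hp hx₀E hx₀
    hbE hmin
  refine ⟨b, hb, hbE.1, fun i => logDiff_dotProduct_eq_zero_of_isLocalMin hp hb ?_⟩
  have hpos : ∀ᶠ s in 𝓝 (0 : ℝ), b + s • d i ∈ {y : Fin m → ℝ | ∀ j, 0 < y j} :=
    (continuous_const.add (continuous_id.smul continuous_const)).continuousAt.eventually_mem
      (isOpen_setOf_forall_pos.mem_nhds (by simpa using hb))
  filter_upwards [hpos] with s hs
  rw [zero_smul, add_zero]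
  refine isMinOn_iff.1 hmin _ ⟨?_, fun j => (hs j).le⟩
  rw [add_sub_right_comm]
  exact S.add_mem hbE.1 (S.smul_mem s (Submodule.subset_span ⟨i, rfl⟩))

end MassAction

lemma ComplexBalanced.isStrictLyapunov {m r : ℕ} {z z' : Fin r → Fin m → ℕ} {k : Fin r → ℝ}
    {p x₀ : Fin m → ℝ} (hk : ∀ i, 0 < k i) (hcb : ComplexBalanced m r z z' k p)
    (hp : ∀ j, 0 < p j)
    (hpx₀ : p - x₀ ∈ Submodule.span ℝ (Set.range (reactionVector z z'))) :
    IsStrictLyapunov (massActionField k z z')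
      (nonnegClass (Submodule.span ℝ (Set.range (reactionVector z z'))) x₀)
      {y | ∀ j, 0 < y j} p (freeEnergy p) (fun y => logDiff y p ⬝ᵥ massActionField k z z' y) where
  continuous := continuous_freeEnergy p
  apply_self := freeEnergy_self hp
  pos _ hy := freeEnergy_pos hp hy.2
  continuousOn_deriv := by
    unfold dotProduct logDiff
    fun_prop (disch := exact fun y hy => (hy _).ne')
  deriv_nonpos _ hy := hcb.logDiff_dotProduct_massActionField_nonpos hk hp hy.2
  eq_of_deriv_eq_zero y hy := hcb.eq_of_logDiff_dotProduct_massActionField_eq_zero hk hp hy.2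
    (sub_sub_sub_cancel_right y p x₀ ▸ Submodule.sub_mem _ hy.1.1 hpx₀)
  hasDerivWithinAt x hx t ht := (hx.2 t ht).freeEnergy (hx.1 t ht).2 hp

theorem complexBalanced_locally_stable_dynamics_general
    (m r : ℕ)
    (z z' : Fin r → Fin m → ℕ)
    (k : Fin r → ℝ) (hk : ∀ i, 0 < k i)
    (f : (Fin m → ℝ) → (Fin m → ℝ))
    (hf : ∀ x, f x = ∑ i : Fin r, k i •
      (fun j => ((z' i j : ℝ) - (z i j : ℝ)) * ∏ l, x l ^ z i l))
    (xs : Fin m → ℝ) (hxs_pos : ∀ j, 0 < xs j)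
    (hxs : ComplexBalanced m r z z' k xs)
    (x0 : Fin m → ℝ) (hx0 : ∀ j, 0 < x0 j) :
    ∃ xbar : Fin m → ℝ,
      xbar ∈ {x : Fin m → ℝ |
        (x - x0) ∈ Submodule.span ℝ
          (Set.range (fun i : Fin r => fun j => ((z' i j : ℝ) - (z i j : ℝ)))) ∧
        ∀ j, 0 < x j} ∧
      f xbar = 0 ∧
      (∀ y ∈ {x : Fin m → ℝ |
        (x - x0) ∈ Submodule.span ℝ
          (Set.range (fun i : Fin r => fun j => ((z' i j : ℝ) - (z i j : ℝ)))) ∧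
        ∀ j, 0 < x j}, f y = 0 → y = xbar) ∧
      IsLocAsympStableRel m f
        {x : Fin m → ℝ |
          (x - x0) ∈ Submodule.span ℝ
            (Set.range (fun i : Fin r => fun j => ((z' i j : ℝ) - (z i j : ℝ)))) ∧
          ∀ j, 0 < x j} xbar := by
  obtain rfl : f = massActionField k z z' := funext hf
  obtain ⟨xbar, hpos, hmem, horth⟩ :=
    exists_pos_sub_mem_span_logDiff_orthogonal (reactionVector z z') hxs_pos hx0
  have hcb := hxs.of_logDiff_dotProduct_reactionVector_eq_zero hxs_pos hpos horth
  have hL := hcb.isStrictLyapunov hk hpos hmem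
  rw [setOf_sub_mem_and_pos_eq_inter]
  exact ⟨xbar, ⟨⟨hmem, fun j => (hpos j).le⟩, hpos⟩, hcb.massActionField_eq_zero,
    fun y hy hfy => hL.eq_of_deriv_eq_zero y hy (by rw [hfy, dotProduct_zero]),
    hL.isLocAsympStableRel (isClosed_nonnegClass _ _) isOpen_setOf_forall_pos hpos⟩

/-- Paper: Theorem 2.1, from Horn–Jackson. A complex balanced
mass-action system possesses locally stable dynamics: each positive stoichiometric
compatibility class `(x₀ + S) ∩ ℝ^m_{>0}` contains exactly one equilibrium, and this
equilibrium is locally asymptotically stable relative to the class. -/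
theorem complexBalanced_locally_stable_dynamics
    (m r : ℕ)
    (z z' : Fin r → Fin m → ℕ) (hzz : ∀ i, z i ≠ z' i)
    (k : Fin r → ℝ) (hk : ∀ i, 0 < k i)
    (f : (Fin m → ℝ) → (Fin m → ℝ))
    (hf : ∀ x, f x = ∑ i : Fin r, k i •
      (fun j => ((z' i j : ℝ) - (z i j : ℝ)) * ∏ l, x l ^ z i l))
    (xs : Fin m → ℝ) (hxs_pos : ∀ j, 0 < xs j)
    (hxs : ComplexBalanced m r z z' k xs)
    (x0 : Fin m → ℝ) (hx0 : ∀ j, 0 < x0 j) :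
    ∃ xbar : Fin m → ℝ,
      xbar ∈ {x : Fin m → ℝ |
        (x - x0) ∈ Submodule.span ℝ
          (Set.range (fun i : Fin r => fun j => ((z' i j : ℝ) - (z i j : ℝ)))) ∧
        ∀ j, 0 < x j} ∧
      f xbar = 0 ∧
      (∀ y ∈ {x : Fin m → ℝ |
        (x - x0) ∈ Submodule.span ℝ
          (Set.range (fun i : Fin r => fun j => ((z' i j : ℝ) - (z i j : ℝ)))) ∧
        ∀ j, 0 < x j}, f y = 0 → y = xbar) ∧
      IsLocAsympStableRel m f
        {x : Fin m → ℝ |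
          (x - x0) ∈ Submodule.span ℝ
            (Set.range (fun i : Fin r => fun j => ((z' i j : ℝ) - (z i j : ℝ)))) ∧
          ∀ j, 0 < x j} xbar :=
  complexBalanced_locally_stable_dynamics_general m r z z' k hk f hf xs hxs_pos hxs x0 hx0
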